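/- arXiv:1303.3620 — 2 statements merged into one kernel-verified Lean document; each statement's English description precedes it below -/
import Mathlib

section
/- For each finite sequence s ∈ ω^{<ω} define v_s = { Σ_{n<dom s} ((1+p(n))/√(2^n))·e_{n,s(n)} : p ∈ 2^{dom s} } ⊂ ℓ², where {e_{n,m}} is an orthonormal basis of ℓ² indexed by pairs. If s, t ∈ ω^{<ω}, dom s = dom t = k, s ≠ t, then any two points x ∈ v_s, y ∈ v_t with s(j) ≠ t(j) for some j < k satisfy ‖x - y‖ ≥ √2/√(2^j) ≥ √2/√(2^{k-1}). -/
open RealInnerProductSpace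

noncomputable abbrev ℓ2 : Type := lp (fun _ : ℕ => ℝ) 2

def b2r (b : Bool) : ℝ := if b then 1 else 0

noncomputable def vSet (e : ℕ × ℕ → ℓ2) {k : ℕ} (s : Fin k → ℕ) : Set ℓ2 :=
  {x | ∃ p : Fin k → Bool,
    x = ∑ n : Fin k, ((1 + b2r (p n)) / Real.sqrt (2^(n:ℕ))) • e ((n:ℕ), s n)}

lemma b2r_nonneg (b : Bool) : 0 ≤ b2r b := by cases b <;> simp [b2r]

lemma inner_vsum (e : HilbertBasis (ℕ × ℕ) ℝ ℓ2) {k : ℕ} (u : Fin k → ℕ)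
    (r : Fin k → Bool) (a : ℕ × ℕ) :
    ⟪e a, ∑ n : Fin k, ((1 + b2r (r n)) / Real.sqrt (2^(n:ℕ))) • e ((n:ℕ), u n)⟫
    = ∑ n : Fin k, ((1 + b2r (r n)) / Real.sqrt (2^(n:ℕ))) *
        (if a = ((n:ℕ), u n) then 1 else 0) := by
  rw [inner_sum]
  refine Finset.sum_congr rfl fun n _ => ?_
  rw [real_inner_smul_right, orthonormal_iff_ite.mp e.orthonormal]

/-- if `s ≠ t` have the same length `k`, say `s j ≠ t j`, then any
`x ∈ v_s` and `y ∈ v_t` satisfy `‖x - y‖ ≥ √2/√(2^j) ≥ √2/√(2^{k-1})`. -/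
theorem vSet_separation (e : HilbertBasis (ℕ × ℕ) ℝ ℓ2) {k : ℕ}
    (s t : Fin k → ℕ) (j : Fin k) (hst : s j ≠ t j)
    (x y : ℓ2) (hx : x ∈ vSet (⇑e) s) (hy : y ∈ vSet (⇑e) t) :
    Real.sqrt 2 / Real.sqrt (2^((j:ℕ))) ≤ ‖x - y‖ ∧
      Real.sqrt 2 / Real.sqrt (2^(k-1)) ≤ Real.sqrt 2 / Real.sqrt (2^((j:ℕ))) := by
  obtain ⟨p, rfl⟩ := hx
  obtain ⟨q, rfl⟩ := hy
  set X := ∑ n : Fin k, ((1 + b2r (p n)) / Real.sqrt (2^(n:ℕ))) • (e : ℕ × ℕ → ℓ2) ((n:ℕ), s n) with hX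
  set Y := ∑ n : Fin k, ((1 + b2r (q n)) / Real.sqrt (2^(n:ℕ))) • (e : ℕ × ℕ → ℓ2) ((n:ℕ), t n) with hY
  have hsq : (0:ℝ) < Real.sqrt (2^(j:ℕ)) := Real.sqrt_pos.mpr (by positivity)
  -- compute the four inner products
  have key : ∀ (u : Fin k → ℕ) (r : Fin k → Bool) (m : ℕ),
      ⟪e ((j:ℕ), m), ∑ n : Fin k, ((1 + b2r (r n)) / Real.sqrt (2^(n:ℕ))) • (e : ℕ × ℕ → ℓ2) ((n:ℕ), u n)⟫
      = if m = u j then (1 + b2r (r j)) / Real.sqrt (2^(j:ℕ)) else 0 := by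
    intro u r m
    rw [inner_vsum]
    by_cases hm : m = u j
    · subst hm
      rw [Finset.sum_eq_single j]
      · simp
      · intro n _ hn
        have : ((j:ℕ), u j) ≠ ((n:ℕ), u n) := by
          intro h
          exact hn (Fin.ext (congrArg Prod.fst h).symm)
        simp [this]
      · simp
    · rw [if_neg hm]
      refine Finset.sum_eq_zero fun n _ => ?_
      have : ((j:ℕ), m) ≠ ((n:ℕ), u n) := by
        intro h
        obtain ⟨h1, h2⟩ := Prod.mk.injEq .. ▸ h
        have : n = j := Fin.ext h1.symm
        subst this; exact hm h2
      simp [this]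
  have hxs : ⟪e ((j:ℕ), s j), X - Y⟫ = (1 + b2r (p j)) / Real.sqrt (2^(j:ℕ)) := by
    rw [inner_sub_right, hX, hY, key s p, key t q, if_pos rfl, if_neg hst, sub_zero]
  have hxt : ⟪e ((j:ℕ), t j), X - Y⟫ = -((1 + b2r (q j)) / Real.sqrt (2^(j:ℕ))) := by
    rw [inner_sub_right, hX, hY, key s p, key t q, if_pos rfl, if_neg (Ne.symm hst), zero_sub]
  -- Bessel over the two-element set
  have hne : ((j:ℕ), s j) ≠ ((j:ℕ), t j) := by simp [hst]
  have bessel := e.orthonormal.sum_inner_products_le (s := {((j:ℕ), s j), ((j:ℕ), t j)}) (X - Y)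
  rw [Finset.sum_pair hne, hxs, hxt] at bessel
  constructor
  · have hlow : 2 / (2^(j:ℕ)) ≤ ‖X - Y‖ ^ 2 := by
      refine le_trans ?_ bessel
      have hb1 := b2r_nonneg (p j)
      have hb2 := b2r_nonneg (q j)
      have e1 : (1:ℝ) / (2^(j:ℕ)) ≤ ‖(1 + b2r (p j)) / Real.sqrt (2^(j:ℕ))‖ ^ 2 := by
        rw [Real.norm_eq_abs, abs_of_nonneg (by positivity), div_pow,
          Real.sq_sqrt (by positivity : (0:ℝ) ≤ 2^(j:ℕ))]
        gcongr
        nlinarith [hb1]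
      have e2 : (1:ℝ) / (2^(j:ℕ)) ≤ ‖-((1 + b2r (q j)) / Real.sqrt (2^(j:ℕ)))‖ ^ 2 := by
        rw [norm_neg, Real.norm_eq_abs, abs_of_nonneg (by positivity), div_pow,
          Real.sq_sqrt (by positivity : (0:ℝ) ≤ 2^(j:ℕ))]
        gcongr
        nlinarith [hb2]
      have hsum : (2:ℝ) / (2^(j:ℕ)) = 1 / (2^(j:ℕ)) + 1 / (2^(j:ℕ)) := by ring
      linarith
    have : Real.sqrt (2 / (2^(j:ℕ))) ≤ ‖X - Y‖ := by
      rw [show ‖X - Y‖ = Real.sqrt (‖X - Y‖ ^ 2) by rw [Real.sqrt_sq (norm_nonneg _)]]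
      exact Real.sqrt_le_sqrt hlow
    rwa [Real.sqrt_div (by norm_num : (0:ℝ) ≤ 2)] at this
  · have hjk : (j:ℕ) ≤ k-1 := Nat.le_pred_of_lt j.isLt
    exact div_le_div_of_nonneg_left (Real.sqrt_nonneg 2) hsq
      (Real.sqrt_le_sqrt (pow_le_pow_right₀ one_le_two hjk))
end

section
/- The set of pairs (C, γ) ∈ F(ℓ²) × C¹([0,1], ℓ²) such that H¹(C ∩ ran γ) > 0 is Borel, where F(ℓ²) carries the Effros Borel structure and C¹([0,1], ℓ²) the topology of the C¹ norm. -/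
open MeasureTheory

noncomputable instance : MeasurableSpace ℓ2 := borel _
instance : BorelSpace ℓ2 := ⟨rfl⟩

/-- The space `F(ℓ²)` of closed subsets of `ℓ²`. -/
def Fl2 : Type := {A : Set ℓ2 // IsClosed A}

/-- The Effros Borel structure on `F(ℓ²)`, generated by the sets
`{A : A ∩ U ≠ ∅}` for `U` open. -/
instance : MeasurableSpace Fl2 :=
  MeasurableSpace.generateFrom
    {S | ∃ U : Set ℓ2, IsOpen U ∧ S = {A : Fl2 | (A.1 ∩ U).Nonempty}}

/-- The space of `C¹` curves into `ℓ²`. -/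
def C1Curves : Type := {γ : ℝ → ℓ2 // ContDiff ℝ 1 γ}

/-- A `C¹` curve gives the pair of continuous maps on `[0,1]`: the curve itself and its
Fréchet derivative; the `C¹` topology is the one induced by this pair (uniform convergence
of the curve and of its derivative on `[0,1]`). -/
noncomputable def c1Pair (γ : C1Curves) :
    C(Set.Icc (0:ℝ) 1, ℓ2) × C(Set.Icc (0:ℝ) 1, ℝ →L[ℝ] ℓ2) :=
  (⟨fun t => γ.1 t, γ.2.continuous.comp continuous_subtype_val⟩,
   ⟨fun t => fderiv ℝ γ.1 t, (γ.2.continuous_fderiv one_ne_zero).comp continuous_subtype_val⟩)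

/-- The `C¹` (sup norm of curve and derivative) topology on `C1Curves`. -/
noncomputable instance : TopologicalSpace C1Curves :=
  TopologicalSpace.induced c1Pair inferInstance

noncomputable instance : MeasurableSpace C1Curves := borel _
instance : BorelSpace C1Curves := ⟨rfl⟩

/-! For compact `S`, `μH[1] S = 0` iff for every `n` some finite family of finite unions of sets
from a countable basis covers `S` with total diameter `< 1/n`, and there are only countably many
such families. So `H¹(C ∩ γ[0,1]) > 0` iff for some `n` each family of total diameter `< 1/n`
leaves uncovered a point of `C ∩ γ[0,1]`, i.e. `C ∩ γ[0,1]` meets the closed complement `F` of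
its union. By compactness of `[0,1]` this happens iff `infEDist (γ t) C + infEDist (γ t) F` gets
arbitrarily small at rational `t ∈ [0,1]`; each of these countably many conditions is Borel, since
`(x, C) ↦ infEDist x C` is continuous in `x` and Effros-measurable in `C`. -/

open MeasureTheory Metric Set Filter TopologicalSpace
open scoped ENNReal

theorem lp.separableSpace {ι : Type*} [Countable ι] {E : ι → Type*}
    [∀ i, NormedAddCommGroup (E i)] [∀ i, SeparableSpace (E i)] {p : ℝ≥0∞} [Fact (1 ≤ p)]
    (hp : p ≠ ∞) : SeparableSpace (lp E p) := by
  classical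
  have hsingle (i : ι) : Continuous (lp.single (E := E) p i) :=
    AddMonoidHomClass.continuous_of_bound (lp.singleAddMonoidHom (E := E) p i) 1 fun x => by
      rw [one_mul]; exact (lp.norm_single (zero_lt_one.trans_le Fact.out) i x).le
  rw [← isSeparable_univ_iff]
  refine (isSeparable_closure.2 <| IsSeparable.iUnion fun s : Finset ι =>
    isSeparable_range (f := fun v : (∀ i : s, E i) => ∑ i : s, lp.single p (i : ι) (v i))
      (by fun_prop)).mono fun f _ => mem_closure_of_tendsto (lp.hasSum_single hp f) ?_
  exact Eventually.of_forall fun s =>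
    mem_iUnion.2 ⟨s, fun i => f i, Finset.sum_coe_sort s fun i => lp.single p i (f i)⟩

instance : SeparableSpace ℓ2 := lp.separableSpace ENNReal.ofNat_ne_top

section HausdorffNull

variable {X : Type*} [EMetricSpace X] [MeasurableSpace X] [BorelSpace X]

theorem exists_cover_tsum_ediam_lt_of_hausdorffMeasure_eq_zero {S : Set X} (hS : μH[1] S = 0)
    {ε : ℝ≥0∞} (hε : ε ≠ 0) : ∃ t : ℕ → Set X, S ⊆ ⋃ k, t k ∧ ∑' k, ediam (t k) < ε := by
  have hinf : ⨅ (t : ℕ → Set X) (_ : S ⊆ ⋃ k, t k) (_ : ∀ k, ediam (t k) ≤ 1),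
      ∑' k, ⨆ _ : (t k).Nonempty, ediam (t k) ^ (1 : ℝ) < ε := by
    refine lt_of_le_of_lt ?_ (pos_iff_ne_zero.2 hε)
    rw [← hS, Measure.hausdorffMeasure_apply]
    exact le_iSup₂_of_le (1 : ℝ≥0∞) one_pos le_rfl
  obtain ⟨t, ht⟩ := iInf_lt_iff.1 hinf
  obtain ⟨hSt, ht⟩ := iInf_lt_iff.1 ht
  obtain ⟨-, ht⟩ := iInf_lt_iff.1 ht
  refine ⟨t, hSt, lt_of_le_of_lt (ENNReal.tsum_le_tsum fun k => ?_) ht⟩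
  rcases (t k).eq_empty_or_nonempty with h | h
  · simp [h]
  · exact le_iSup_of_le h (by rw [ENNReal.rpow_one])

theorem exists_open_cover_tsum_ediam_lt_of_hausdorffMeasure_eq_zero {S : Set X}
    (hS : μH[1] S = 0) {ε : ℝ≥0∞} (hε : ε ≠ 0) :
    ∃ V : ℕ → Set X, (∀ k, IsOpen (V k)) ∧ S ⊆ ⋃ k, V k ∧ ∑' k, ediam (V k) < ε := by
  obtain ⟨t, hSt, ht⟩ := exists_cover_tsum_ediam_lt_of_hausdorffMeasure_eq_zero hS
    (ENNReal.half_pos hε).ne'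
  obtain ⟨δ, hδ, hδε⟩ := ENNReal.exists_pos_sum_of_countable (ENNReal.half_pos
    (ENNReal.half_pos hε).ne').ne' ℕ
  refine ⟨fun k => thickening (δ k) (t k), fun k => isOpen_thickening,
    hSt.trans <| iUnion_mono fun k => self_subset_thickening (by exact_mod_cast hδ k) _, ?_⟩
  calc ∑' k, ediam (thickening (δ k) (t k))
      ≤ ∑' k, (ediam (t k) + 2 * δ k) := ENNReal.tsum_le_tsum fun k => ediam_thickening_le _
    _ = ∑' k, ediam (t k) + 2 * ∑' k, (δ k : ℝ≥0∞) := by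
        rw [ENNReal.tsum_add, ENNReal.tsum_mul_left]
    _ < ε / 2 + 2 * (ε / 2 / 2) := by
        gcongr
        exact ENNReal.ofNat_ne_top
    _ = ε := by rw [ENNReal.mul_div_cancel two_ne_zero ENNReal.ofNat_ne_top, ENNReal.add_halves]

end HausdorffNull

section BasicCovers

variable {X : Type*} [EMetricSpace X] [SecondCountableTopology X]

def basicUnion (A : Finset (countableBasis X)) : Set X := ⋃ b ∈ A, (b : Set X)

theorem isOpen_basicUnion (A : Finset (countableBasis X)) : IsOpen (basicUnion A) :=
  isOpen_biUnion fun b _ => isOpen_of_mem_countableBasis b.2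

theorem exists_basicUnion_cover_of_open_cover {S : Set X} (hS : IsCompact S) {V : ℕ → Set X}
    (hV : ∀ k, IsOpen (V k)) (hSV : S ⊆ ⋃ k, V k) :
    ∃ L : Finset (Finset (countableBasis X)),
      ∑ A ∈ L, ediam (basicUnion A) ≤ ∑' k, ediam (V k) ∧ S ⊆ ⋃ A ∈ L, basicUnion A := by
  classical
  let J := {q : ℕ × countableBasis X // (q.2 : Set X) ⊆ V q.1}
  obtain ⟨T, hT⟩ := hS.elim_finite_subcover (fun j : J => (j.1.2 : Set X))
    (fun j => isOpen_of_mem_countableBasis j.1.2.2) fun x hx => by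
      obtain ⟨k, hxk⟩ := mem_iUnion.1 (hSV hx)
      obtain ⟨b, hb, hxb, hbV⟩ :=
        (isBasis_countableBasis X).exists_subset_of_mem_open hxk (hV k)
      exact mem_iUnion.2 ⟨⟨(k, ⟨b, hb⟩), hbV⟩, hxb⟩
  -- merging, for each `k`, the basic sets chosen inside `V k` keeps the total diameter in check
  let A (k : ℕ) : Finset (countableBasis X) := {j ∈ T | j.1.1 = k}.image (·.1.2)
  have hAV (k : ℕ) : basicUnion (A k) ⊆ V k := iUnion₂_subset fun b hb => by
    obtain ⟨j, hj, rfl⟩ := Finset.mem_image.1 hb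
    exact (Finset.mem_filter.1 hj).2 ▸ j.2
  refine ⟨(T.image (·.1.1)).image A, ?_, fun x hx => ?_⟩
  · calc ∑ B ∈ (T.image (·.1.1)).image A, ediam (basicUnion B)
        ≤ ∑ k ∈ T.image (·.1.1), ediam (basicUnion (A k)) :=
          Finset.sum_image_le_of_nonneg fun _ _ => zero_le
      _ ≤ ∑ k ∈ T.image (·.1.1), ediam (V k) := Finset.sum_le_sum fun k _ => ediam_mono (hAV k)
      _ ≤ ∑' k, ediam (V k) := ENNReal.sum_le_tsum _
  · obtain ⟨j, hjT, hxj⟩ := mem_iUnion₂.1 (hT hx)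
    exact mem_iUnion₂.2 ⟨A j.1.1, Finset.mem_image_of_mem _ (Finset.mem_image_of_mem _ hjT),
      mem_iUnion₂.2 ⟨j.1.2, Finset.mem_image.2 ⟨j, Finset.mem_filter.2 ⟨hjT, rfl⟩, rfl⟩, hxj⟩⟩

variable [MeasurableSpace X] [BorelSpace X]

theorem hausdorffMeasure_eq_zero_iff_basicUnion_cover {S : Set X} (hS : IsCompact S) :
    μH[1] S = 0 ↔ ∀ n : ℕ, ∃ L : Finset (Finset (countableBasis X)),
      ∑ A ∈ L, ediam (basicUnion A) < (n : ℝ≥0∞)⁻¹ ∧ S ⊆ ⋃ A ∈ L, basicUnion A := by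
  constructor
  · intro h n
    obtain ⟨V, hV, hSV, hVn⟩ := exists_open_cover_tsum_ediam_lt_of_hausdorffMeasure_eq_zero h
      (ENNReal.inv_ne_zero.2 (ENNReal.natCast_ne_top n))
    obtain ⟨L, hL, hSL⟩ := exists_basicUnion_cover_of_open_cover hS hV hSV
    exact ⟨L, hL.trans_lt hVn, hSL⟩
  · intro h
    choose L hL hSL using h
    have hle := Measure.hausdorffMeasure_le_liminf_sum 1 S (fun n : ℕ => (n : ℝ≥0∞)⁻¹)
      ENNReal.tendsto_inv_nat_nhds_zero (fun n (A : L n) => basicUnion A.1)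
      (Eventually.of_forall fun n A => (Finset.single_le_sum (fun _ _ => zero_le)
        A.2).trans (hL n).le)
      (Eventually.of_forall fun n x hx => by
        obtain ⟨A, hA, hxA⟩ := mem_iUnion₂.1 (hSL n hx)
        exact mem_iUnion.2 ⟨⟨A, hA⟩, hxA⟩)
    refine le_antisymm ?_ zero_le
    calc μH[1] S
        ≤ liminf (fun n => ∑ A : L n, ediam (basicUnion A.1) ^ (1 : ℝ)) atTop := hle
      _ ≤ liminf (fun n : ℕ => (n : ℝ≥0∞)⁻¹) atTop := by
          refine liminf_le_liminf (Eventually.of_forall fun n => ?_)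
          simp only [ENNReal.rpow_one]
          exact (Finset.sum_coe_sort (L n) fun A => ediam (basicUnion A)).le.trans (hL n).le
      _ = 0 := ENNReal.tendsto_inv_nat_nhds_zero.liminf_eq

end BasicCovers

theorem IsCompact.exists_eq_zero_iff_forall_exists_lt_inv_natCast {α : Type*}
    [TopologicalSpace α] {K D : Set α} (hK : IsCompact K) (hDK : D ⊆ K) (hKD : K ⊆ closure D)
    {g : α → ℝ≥0∞} (hg : Continuous g) :
    (∃ t ∈ K, g t = 0) ↔ ∀ n : ℕ, ∃ s ∈ D, g s < (n : ℝ≥0∞)⁻¹ := by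
  constructor
  · rintro ⟨t, htK, ht⟩ n
    obtain ⟨s, hs, hsD⟩ := mem_closure_iff.1 (hKD htK) _ (isOpen_lt hg continuous_const)
      (show g t < (n : ℝ≥0∞)⁻¹ by simp [ht])
    exact ⟨s, hsD, hs⟩
  · intro h
    obtain ⟨t, htK, htmin⟩ := hK.exists_isMinOn
      (let ⟨s, hsD, _⟩ := h 0; ⟨s, hDK hsD⟩) hg.continuousOn
    refine ⟨t, htK, by_contra fun ht => ?_⟩
    obtain ⟨n, hn⟩ := ENNReal.exists_inv_nat_lt ht
    obtain ⟨s, hsD, hs⟩ := h n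
    exact (htmin (hDK hsD)).not_gt (hs.trans hn)

theorem Icc_subset_closure_inter_range_ratCast {a b : ℝ} (hab : a ≠ b) :
    Icc a b ⊆ closure (Icc a b ∩ range ((↑) : ℚ → ℝ)) := by
  calc Icc a b = closure (Ioo a b) := (closure_Ioo hab).symm
    _ ⊆ closure (Ioo a b ∩ range ((↑) : ℚ → ℝ)) := closure_minimal
        (Rat.denseRange_cast.open_subset_closure_inter isOpen_Ioo) isClosed_closure
    _ ⊆ closure (Icc a b ∩ range ((↑) : ℚ → ℝ)) :=
        closure_mono (inter_subset_inter_left _ Ioo_subset_Icc_self)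

theorem inter_image_inter_nonempty_iff {α X : Type*} [PseudoEMetricSpace X] {C F : Set X}
    (hC : IsClosed C) (hF : IsClosed F) (γ : α → X) (K : Set α) :
    (C ∩ γ '' K ∩ F).Nonempty ↔ ∃ t ∈ K, infEDist (γ t) C + infEDist (γ t) F = 0 := by
  simp only [add_eq_zero, ← mem_iff_infEDist_zero_of_closed hC,
    ← mem_iff_infEDist_zero_of_closed hF]
  constructor
  · rintro ⟨-, ⟨hC, t, htK, rfl⟩, hF⟩
    exact ⟨t, htK, hC, hF⟩
  · rintro ⟨t, htK, hC, hF⟩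
    exact ⟨γ t, ⟨hC, t, htK, rfl⟩, hF⟩

theorem measurable_infEDist_fl2 (x : ℓ2) : Measurable fun C : Fl2 => infEDist x C.1 := by
  refine measurable_of_Iio fun a => MeasurableSpace.measurableSet_generateFrom
    ⟨eball x a, isOpen_eball, ?_⟩
  ext C
  simp only [mem_preimage, mem_Iio, infEDist_lt_iff, mem_ofPred_eq, Set.Nonempty, mem_inter_iff,
    mem_eball, edist_comm x]

theorem measurable_infEDist_prod_fl2 : Measurable fun q : ℓ2 × Fl2 => infEDist q.1 q.2.1 :=
  measurable_uncurry_of_continuous_of_measurable (u := fun x (C : Fl2) => infEDist x C.1)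
    (fun _ => continuous_infEDist) measurable_infEDist_fl2

theorem continuous_apply_c1Curves {s : ℝ} (hs : s ∈ Icc (0 : ℝ) 1) :
    Continuous fun γ : C1Curves => γ.1 s :=
  (continuous_eval_const (⟨s, hs⟩ : Icc (0 : ℝ) 1)).comp
    (continuous_fst.comp (continuous_induced_dom : Continuous c1Pair))

theorem measurableSet_inter_image_inter_nonempty {F : Set ℓ2} (hF : IsClosed F) :
    MeasurableSet {p : Fl2 × C1Curves | (p.1.1 ∩ p.2.1 '' Icc 0 1 ∩ F).Nonempty} := by
  let g (s : ℝ) (p : Fl2 × C1Curves) : ℝ≥0∞ := infEDist (p.2.1 s) p.1.1 + infEDist (p.2.1 s) F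
  have hg {s : ℝ} (hs : s ∈ Icc (0 : ℝ) 1) : Measurable (g s) := by
    have hγs : Measurable fun p : Fl2 × C1Curves => p.2.1 s :=
      (continuous_apply_c1Curves hs).measurable.comp measurable_snd
    exact (measurable_infEDist_prod_fl2.comp (hγs.prodMk measurable_fst)).add
      (continuous_infEDist.measurable.comp hγs)
  let D := Icc (0 : ℝ) 1 ∩ range ((↑) : ℚ → ℝ)
  have hiff (p : Fl2 × C1Curves) :
      (p.1.1 ∩ p.2.1 '' Icc 0 1 ∩ F).Nonempty ↔
        ∀ n : ℕ, p ∈ ⋃ s ∈ D, {q | g s q < (n : ℝ≥0∞)⁻¹} := by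
    simp only [mem_iUnion₂, mem_ofPred_eq, exists_prop]
    exact (inter_image_inter_nonempty_iff p.1.2 hF p.2.1 _).trans
      (isCompact_Icc.exists_eq_zero_iff_forall_exists_lt_inv_natCast inter_subset_left
        (Icc_subset_closure_inter_range_ratCast zero_ne_one)
        ((continuous_infEDist.comp p.2.2.continuous).add
          (continuous_infEDist.comp p.2.2.continuous)))
  simp_rw [hiff, ofPred_forall, ofPred_mem_eq]
  exact .iInter fun n => .biUnion ((countable_range _).mono inter_subset_right) fun s hs =>
    measurableSet_lt (hg hs.1) measurable_const

/-- the set of pairs `(C, γ)` with `H¹(C ∩ ran γ) > 0` is Borel in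
`F(ℓ²) × C¹([0,1], ℓ²)`. -/
theorem measurable_positive_intersection :
    MeasurableSet {p : Fl2 × C1Curves |
      0 < μH[1] (p.1.1 ∩ p.2.1 '' Set.Icc (0:ℝ) 1)} := by
  have hpos (p : Fl2 × C1Curves) : 0 < μH[1] (p.1.1 ∩ p.2.1 '' Icc 0 1) ↔
      ∃ n : ℕ, ∀ L : Finset (Finset (countableBasis ℓ2)),
        ∑ A ∈ L, ediam (basicUnion A) < (n : ℝ≥0∞)⁻¹ →
          (p.1.1 ∩ p.2.1 '' Icc 0 1 ∩ (⋃ A ∈ L, basicUnion A)ᶜ).Nonempty := by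
    have hK : IsCompact (p.1.1 ∩ p.2.1 '' Icc 0 1) :=
      (isCompact_Icc.image p.2.2.continuous).inter_left p.1.2
    simp only [pos_iff_ne_zero, Ne, hausdorffMeasure_eq_zero_iff_basicUnion_cover hK,
      not_forall, not_exists, not_and, inter_compl_nonempty_iff]
  simp_rw [hpos, ofPred_exists, ofPred_forall]
  exact .iUnion fun n => .iInter fun L => .iInter fun _ =>
    measurableSet_inter_image_inter_nonempty
      (isOpen_biUnion fun A _ => isOpen_basicUnion A).isClosed_compl
end
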